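/- arXiv:1711.11354 — 2 statements merged into one kernel-verified Lean document; each statement's English description precedes it below -/
import Mathlib

section
/- For all bounded Borel-measurable functions g₁, g₂ : [0,1] → ℝ, sup_{s∈[0,1]} |G*(g₁)(s) − G*(g₂)(s)| ≤ (1 − 2^{−β−1}) · sup_{s∈[0,1]} |g₁(s) − g₂(s)|. -/
/-! Write `d = g₁ - g₂` and `M = sup |d|`. The difference `G*(g₁)(s) - G*(g₂)(s)` is `(β+1)/2`
times `∫_s^1 v^β d(s/v) dv + ∫_0^s (1-v)^β d((s-v)/(1-v)) dv`; after the substitution `w = 1 - v`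
both integrals have the form `∫_t^1 w^β d(ψ w) dw` with `ψ` mapping `(t,1]` into `[0,1]`, so they
are bounded by `M (1 - t^{β+1})/(β+1)`. Hence
`|G*(g₁)(s) - G*(g₂)(s)| ≤ M (1 - (s^{β+1} + (1-s)^{β+1})/2)`, and convexity of `x ↦ x^{β+1}`
gives `s^{β+1} + (1-s)^{β+1} ≥ 2·2^{-β-1}`. -/

open MeasureTheory Set Filter Topology ProbabilityTheory
open scoped Classical

noncomputable section

namespace Quadtree

/-- The exponent `β = (√17 − 3)/2`. -/
def betaQ : ℝ := (Real.sqrt 17 - 3) / 2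

/-- The constant `K₁ = Γ(2β+2)Γ(β+2) / (2Γ(β+1)³Γ(β/2+1)²)`. -/
def K1 : ℝ :=
  Real.Gamma (2 * betaQ + 2) * Real.Gamma (betaQ + 2) /
    (2 * Real.Gamma (betaQ + 1) ^ 3 * Real.Gamma (betaQ / 2 + 1) ^ 2)

/-- The function `h(t) = (t(1−t))^{β/2}`. -/
def hfun (t : ℝ) : ℝ := (t * (1 - t)) ^ (betaQ / 2)

/-- The unit square `[0,1]²`. -/
def unitSq : Set (ℝ × ℝ) := Icc (0:ℝ) 1 ×ˢ Icc (0:ℝ) 1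

/-- The uniform distribution on the unit square. -/
def unif2 : Measure (ℝ × ℝ) := volume.restrict unitSq

/-- The quadrant (inside the unit square) of the point `w` that contains `z`:
south-west `[0,w₁]×[0,w₂]`, north-west `[0,w₁]×(w₂,1]`, south-east `(w₁,1]×[0,w₂]`,
north-east `(w₁,1]×(w₂,1]`. -/
def quadrant (w z : ℝ × ℝ) : Set (ℝ × ℝ) :=
  (if z.1 ≤ w.1 then Icc 0 w.1 else Ioc w.1 1) ×ˢ
    (if z.2 ≤ w.2 then Icc 0 w.2 else Ioc w.2 1)

/-- `cellAt p k z` is the cell containing `z` in the quadtree partition of `[0,1]²`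
generated by successive insertion of the points `p 0, …, p (k-1)`. -/
def cellAt (p : ℕ → ℝ × ℝ) : ℕ → ℝ × ℝ → Set (ℝ × ℝ)
  | 0, _ => unitSq
  | k + 1, z =>
      if p k ∈ cellAt p k z then cellAt p k z ∩ quadrant (p k) z else cellAt p k z

/-- `Rcell p i` is the rectangle of the partition generated by `p 0, …, p (i-1)`
in which the point `p i` is inserted (this is `R_{i+1}` in 1-indexed notation). -/
def Rcell (p : ℕ → ℝ × ℝ) (i : ℕ) : Set (ℝ × ℝ) := cellAt p i (p i)

/-- The half of the unit square (horizontal or vertical split at `w`) containing `z`;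
the lower/left piece is closed at the splitting line, the upper/right piece open at it. -/
def kdHalf (horizontal : Bool) (w z : ℝ × ℝ) : Set (ℝ × ℝ) :=
  if horizontal then
    (if z.2 ≤ w.2 then Icc (0:ℝ) 1 ×ˢ Icc 0 w.2 else Icc (0:ℝ) 1 ×ˢ Ioc w.2 1)
  else
    (if z.1 ≤ w.1 then Icc 0 w.1 ×ˢ Icc (0:ℝ) 1 else Ioc w.1 1 ×ˢ Icc (0:ℝ) 1)

/-- `kdCellAt hRoot p k z` is the pair (cell containing `z`, its depth) in the 2-d tree
partition generated by `p 0, …, p (k-1)`; splits are horizontal at even depths iff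
`hRoot = true` ('=' version), and vertical at even depths iff `hRoot = false` ('⊥'). -/
def kdCellAt (hRoot : Bool) (p : ℕ → ℝ × ℝ) : ℕ → ℝ × ℝ → Set (ℝ × ℝ) × ℕ
  | 0, _ => (unitSq, 0)
  | k + 1, z =>
      let C := kdCellAt hRoot p k z
      if p k ∈ C.1 then
        (C.1 ∩ kdHalf (if C.2 % 2 = 0 then hRoot else !hRoot) (p k) z, C.2 + 1)
      else C

/-- The 2-d tree cell in which `p i` is inserted. -/
def kdRcell (hRoot : Bool) (p : ℕ → ℝ × ℝ) (i : ℕ) : Set (ℝ × ℝ) :=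
  (kdCellAt hRoot p i (p i)).1

/-- The query rectangle `Q(a,b,c,d) = (a,b] × (c,d]`. -/
def Qrect (a b c d : ℝ) : Set (ℝ × ℝ) := Ioc a b ×ˢ Ioc c d

/-- The parameter set `I = {(a,b,c,d) ∈ [0,1]⁴ : a ≤ b, c ≤ d}`. -/
def Iset : Set (ℝ × ℝ × ℝ × ℝ) :=
  {q | 0 ≤ q.1 ∧ q.1 ≤ q.2.1 ∧ q.2.1 ≤ 1 ∧ 0 ≤ q.2.2.1 ∧ q.2.2.1 ≤ q.2.2.2 ∧ q.2.2.2 ≤ 1}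

/-- `Vol(a,b,c,d) = (b−a)(d−c)`. -/
def Vol (q : ℝ × ℝ × ℝ × ℝ) : ℝ := (q.2.1 - q.1) * (q.2.2.2 - q.2.2.1)

/-- The number of indices `i < n` satisfying `A i`, as a real number. -/
def countP (p : ℕ → ℝ × ℝ) (n : ℕ) (A : ℕ → Prop) : ℝ :=
  ((Finset.range n).filter A).card

/-- `O_n(a,b,c,d)`: the cost of the range query with rectangle `Q(a,b,c,d)`, i.e. the
number of points among the first `n` whose insertion cell meets the query rectangle. -/
def Ocount (p : ℕ → ℝ × ℝ) (n : ℕ) (q : ℝ × ℝ × ℝ × ℝ) : ℝ :=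
  countP p n fun i => (Rcell p i ∩ Qrect q.1 q.2.1 q.2.2.1 q.2.2.2).Nonempty

/-- The range query cost in the 2-d tree. -/
def kdOcount (hRoot : Bool) (p : ℕ → ℝ × ℝ) (n : ℕ) (q : ℝ × ℝ × ℝ × ℝ) : ℝ :=
  countP p n fun i => (kdRcell hRoot p i ∩ Qrect q.1 q.2.1 q.2.2.1 q.2.2.2).Nonempty

/-- The vertical segment `{t}×[0,1]`. -/
def vline (t : ℝ) : Set (ℝ × ℝ) := {t} ×ˢ Icc (0:ℝ) 1
/-- The horizontal segment `[0,1]×{s}`. -/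
def hlineQ (s : ℝ) : Set (ℝ × ℝ) := Icc (0:ℝ) 1 ×ˢ {s}

/-- `C_n(t)`: the cost of the partial match query at `t`. -/
def Ccount (p : ℕ → ℝ × ℝ) (n : ℕ) (t : ℝ) : ℝ :=
  countP p n fun i => (Rcell p i ∩ vline t).Nonempty

/-- `C̄_n(t)`: the cost of the horizontal partial match query at `t`. -/
def CbarCount (p : ℕ → ℝ × ℝ) (n : ℕ) (t : ℝ) : ℝ :=
  countP p n fun i => (Rcell p i ∩ hlineQ t).Nonempty

/-- `C_n^≥(t)`: visited nodes whose point has first coordinate at least `t`. -/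
def CGe (p : ℕ → ℝ × ℝ) (n : ℕ) (t : ℝ) : ℝ :=
  countP p n fun i => (Rcell p i ∩ vline t).Nonempty ∧ t ≤ (p i).1

/-- `C_n^<(t) = C_n(t) − C_n^≥(t)`. -/
def CLt (p : ℕ → ℝ × ℝ) (n : ℕ) (t : ℝ) : ℝ := Ccount p n t - CGe p n t

/-- `Y_n(t,s)`: number of insertion cells meeting `{t}×[0,s]`. -/
def Ycount (p : ℕ → ℝ × ℝ) (n : ℕ) (t s : ℝ) : ℝ :=
  countP p n fun i => (Rcell p i ∩ ({t} ×ˢ Icc (0:ℝ) s)).Nonempty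

/-- `Ȳ_n(t,s)`: number of insertion cells meeting `[0,s]×{t}`. -/
def YbarCount (p : ℕ → ℝ × ℝ) (n : ℕ) (t s : ℝ) : ℝ :=
  countP p n fun i => (Rcell p i ∩ (Icc (0:ℝ) s ×ˢ {t})).Nonempty

/-- `Y_n^<(t,s)`. -/
def YLt (p : ℕ → ℝ × ℝ) (n : ℕ) (t s : ℝ) : ℝ :=
  countP p n fun i => p i ∈ Icc (0:ℝ) t ×ˢ Icc (0:ℝ) s ∧ (Rcell p i ∩ vline t).Nonempty

/-- `Y_n^≥(t,s)`. -/
def YGe (p : ℕ → ℝ × ℝ) (n : ℕ) (t s : ℝ) : ℝ :=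
  countP p n fun i => p i ∈ Ioc t 1 ×ˢ Icc (0:ℝ) s ∧ (Rcell p i ∩ vline t).Nonempty

/-- `Ȳ_n^<(s,t)`. -/
def YbarLt (p : ℕ → ℝ × ℝ) (n : ℕ) (s t : ℝ) : ℝ :=
  countP p n fun i => p i ∈ Icc (0:ℝ) t ×ˢ Icc (0:ℝ) s ∧ (Rcell p i ∩ hlineQ s).Nonempty

/-- `Ȳ_n^≥(s,t)`. -/
def YbarGe (p : ℕ → ℝ × ℝ) (n : ℕ) (s t : ℝ) : ℝ :=
  countP p n fun i => p i ∈ Icc (0:ℝ) t ×ˢ Ioc s 1 ∧ (Rcell p i ∩ hlineQ s).Nonempty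

/-- `D_n^{(1)}(a,b,c,d)`. -/
def Dcnt1 (p : ℕ → ℝ × ℝ) (n : ℕ) (a b c d : ℝ) : ℝ :=
  countP p n fun i => p i ∈ Icc (0:ℝ) a ×ˢ Icc (0:ℝ) c ∧ (a, c) ∈ Rcell p i

/-- `D_n^{(2)}(a,b,c,d)`. -/
def Dcnt2 (p : ℕ → ℝ × ℝ) (n : ℕ) (a b c d : ℝ) : ℝ :=
  countP p n fun i => p i ∈ Icc (0:ℝ) a ×ˢ Ioc d 1 ∧ (a, d) ∈ Rcell p i

/-- `D_n^{(3)}(a,b,c,d)`. -/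
def Dcnt3 (p : ℕ → ℝ × ℝ) (n : ℕ) (a b c d : ℝ) : ℝ :=
  countP p n fun i => p i ∈ Ioc b 1 ×ˢ Icc (0:ℝ) c ∧ (b, c) ∈ Rcell p i

/-- `D_n^{(4)}(a,b,c,d)`. -/
def Dcnt4 (p : ℕ → ℝ × ℝ) (n : ℕ) (a b c d : ℝ) : ℝ :=
  countP p n fun i => p i ∈ Ioc b 1 ×ˢ Ioc d 1 ∧ (b, d) ∈ Rcell p i

/-- `N_n(a,b,c,d)`: points falling inside the query rectangle. -/
def Ncount (p : ℕ → ℝ × ℝ) (n : ℕ) (a b c d : ℝ) : ℝ :=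
  countP p n fun i => p i ∈ Qrect a b c d

/-- Supremum norm over the parameter set `I`. -/
def supIset (f : ℝ × ℝ × ℝ × ℝ → ℝ) : ℝ := ⨆ q : Iset, |f q|
/-- Supremum norm over the unit square. -/
def supSq (f : ℝ × ℝ → ℝ) : ℝ := ⨆ ts : unitSq, |f ts|
/-- Supremum norm over `[0,1]`. -/
def supUnit (f : ℝ → ℝ) : ℝ := ⨆ t : Icc (0:ℝ) 1, |f t|

/-- The realization `i ↦ X i ω` of the point sequence. -/
def pts {Ω : Type*} (X : ℕ → Ω → ℝ × ℝ) (ω : Ω) : ℕ → ℝ × ℝ := fun i => X i ω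

/-- `X` is an i.i.d. sequence of uniform random points of `[0,1]²` under `P`. -/
def IsUnifIID {Ω : Type*} [MeasurableSpace Ω] (P : Measure Ω) (X : ℕ → Ω → ℝ × ℝ) : Prop :=
  (∀ i, Measurable (X i)) ∧ iIndepFun X P ∧
    ∀ i, Measure.map (X i) P = unif2

/-- `S n → 0` in probability. -/
def TendstoZeroInProb {Ω : Type*} [MeasurableSpace Ω] (P : Measure Ω) (S : ℕ → Ω → ℝ) : Prop :=
  ∀ ε : ℝ, 0 < ε → Tendsto (fun n => P {ω | ε ≤ |S n ω|}) atTop (𝓝 0)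

/-- `E[|S n|^p] → 0`. -/
def TendstoZeroLp {Ω : Type*} [MeasurableSpace Ω] (P : Measure Ω) (S : ℕ → Ω → ℝ) (p : ℝ) : Prop :=
  Tendsto (fun n => ∫⁻ ω, ENNReal.ofReal (|S n ω| ^ p) ∂P) atTop (𝓝 0)


/-- The four quadrant pieces of the set `S` split at the point `w`
(south-west, north-west, south-east, north-east). -/
def quadPiece (w : ℝ × ℝ) (S : Set (ℝ × ℝ)) : Fin 4 → Set (ℝ × ℝ)
  | 0 => S ∩ (Icc 0 w.1 ×ˢ Icc 0 w.2)
  | 1 => S ∩ (Icc 0 w.1 ×ˢ Ioc w.2 1)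
  | 2 => S ∩ (Ioc w.1 1 ×ˢ Icc 0 w.2)
  | 3 => S ∩ (Ioc w.1 1 ×ˢ Ioc w.2 1)

/-- The first point of the sequence `p` lying in `S` (junk value if there is none). -/
def firstIn (p : ℕ → ℝ × ℝ) (S : Set (ℝ × ℝ)) : ℝ × ℝ :=
  if h : ∃ i, p i ∈ S then p (Nat.find h) else 0

/-- Auxiliary: `Q_v` with the word read in reverse (last letter first). -/
def QvRev (p : ℕ → ℝ × ℝ) : List (Fin 4) → Set (ℝ × ℝ)
  | [] => unitSq
  | r :: v => quadPiece (firstIn p (QvRev p v)) (QvRev p v) r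

/-- The region `Q_v` of the quadtree indexed by the word `v ∈ 𝕋 = ∪ₖ {1,2,3,4}ᵏ`;
the children of `v` are `v ++ [r]`, `r : Fin 4`, and `Q_v` is split at the first
point of the sequence falling into it. -/
def Qv (p : ℕ → ℝ × ℝ) (v : List (Fin 4)) : Set (ℝ × ℝ) := QvRev p v.reverse

/-- `A_v = area(Q_v)/area(Q_{v̄})`. -/
def Av (p : ℕ → ℝ × ℝ) (v : List (Fin 4)) : ℝ :=
  (volume (Qv p v)).toReal / (volume (Qv p v.dropLast)).toReal

/-- Real-valued indicator function. -/
def indic {α : Type*} (S : Set α) (x : α) : ℝ := if x ∈ S then 1 else 0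

/-- `φ_T(t) = 1_T(t)·(t − inf T)/(sup T − inf T)`. -/
def phiOf (T : Set ℝ) (t : ℝ) : ℝ := indic T t * ((t - sInf T) / (sSup T - sInf T))

/-- The time transformation `φ_v` (first coordinate). -/
def phi1 (S : Set (ℝ × ℝ)) (t : ℝ) : ℝ := phiOf (Prod.fst '' S) t
/-- The time transformation `φ'_v` (second coordinate). -/
def phi2 (S : Set (ℝ × ℝ)) (s : ℝ) : ℝ := phiOf (Prod.snd '' S) s

/-- `(U^v, V^v)`: rescaled position of the first point inserted into `Q_v`. -/
def UVv (p : ℕ → ℝ × ℝ) (v : List (Fin 4)) : ℝ × ℝ :=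
  (phi1 (Qv p v) (firstIn p (Qv p v)).1, phi2 (Qv p v) (firstIn p (Qv p v)).2)

/-- The operators `B_r^v`, `r = 1,…,4`. -/
def Bop (p : ℕ → ℝ × ℝ) (v : List (Fin 4)) : Fin 4 → ((ℝ × ℝ) → ℝ) → (ℝ × ℝ) → ℝ
  | 0, f, ts =>
      Av p (v ++ [0]) ^ betaQ *
        (indic (Qv p (v ++ [0])) ts *
            f (phi1 (Qv p (v ++ [0])) ts.1, phi2 (Qv p (v ++ [0])) ts.2) +
          indic (Qv p (v ++ [1])) ts * f (phi1 (Qv p (v ++ [0])) ts.1, 1))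
  | 1, f, ts =>
      Av p (v ++ [1]) ^ betaQ * indic (Qv p (v ++ [1])) ts *
        f (phi1 (Qv p (v ++ [1])) ts.1, phi2 (Qv p (v ++ [1])) ts.2)
  | 2, f, ts =>
      Av p (v ++ [2]) ^ betaQ *
        (indic (Qv p (v ++ [2])) ts *
            f (phi1 (Qv p (v ++ [2])) ts.1, phi2 (Qv p (v ++ [2])) ts.2) +
          indic (Qv p (v ++ [3])) ts * f (phi1 (Qv p (v ++ [2])) ts.1, 1))
  | 3, f, ts =>
      Av p (v ++ [3]) ^ betaQ * indic (Qv p (v ++ [3])) ts *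
        f (phi1 (Qv p (v ++ [3])) ts.1, phi2 (Qv p (v ++ [3])) ts.2)

/-- The iterates `𝒴_n^v`: `𝒴₀^v(t,s) = K₁h(t)`, `𝒴_{n+1}^v = Σ_r B_r^v(𝒴_n^{vr})`. -/
def Yiter (p : ℕ → ℝ × ℝ) : ℕ → List (Fin 4) → (ℝ × ℝ) → ℝ
  | 0, _, ts => K1 * hfun ts.1
  | n + 1, v, ts => ∑ r : Fin 4, Bop p v r (Yiter p n (v ++ [r])) ts

/-- `φ` for the lower part: `1_{[0,u]}(t)·t/u`. -/
def philow (u t : ℝ) : ℝ := indic (Icc (0:ℝ) u) t * (t / u)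
/-- `φ` for the upper part: `1_{(u,1]}(t)·(t−u)/(1−u)`. -/
def phihigh (u t : ℝ) : ℝ := indic (Ioc u 1) t * ((t - u) / (1 - u))

/-- The root operators `B₁,…,B₄` built from a splitting point `(u,v)`. -/
def BopUV (u v : ℝ) : Fin 4 → ((ℝ × ℝ) → ℝ) → (ℝ × ℝ) → ℝ
  | 0, f, ts =>
      (u * v) ^ betaQ *
        (indic (Icc (0:ℝ) u ×ˢ Icc (0:ℝ) v) ts * f (philow u ts.1, philow v ts.2) +
          indic (Icc (0:ℝ) u ×ˢ Ioc v 1) ts * f (philow u ts.1, 1))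
  | 1, f, ts =>
      (u * (1 - v)) ^ betaQ * indic (Icc (0:ℝ) u ×ˢ Ioc v 1) ts *
        f (philow u ts.1, phihigh v ts.2)
  | 2, f, ts =>
      ((1 - u) * v) ^ betaQ *
        (indic (Ioc u 1 ×ˢ Icc (0:ℝ) v) ts * f (phihigh u ts.1, philow v ts.2) +
          indic (Ioc u 1 ×ˢ Ioc v 1) ts * f (phihigh u ts.1, 1))
  | 3, f, ts =>
      ((1 - u) * (1 - v)) ^ betaQ * indic (Ioc u 1 ×ˢ Ioc v 1) ts *
        f (phihigh u ts.1, phihigh v ts.2)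

/-- The coordinate-swapped root operators `B̄₁,…,B̄₄`. -/
def BbarUV (u v : ℝ) : Fin 4 → ((ℝ × ℝ) → ℝ) → (ℝ × ℝ) → ℝ
  | 0, f, ts =>
      (u * v) ^ betaQ *
        (indic (Icc (0:ℝ) v ×ˢ Icc (0:ℝ) u) ts * f (philow v ts.1, philow u ts.2) +
          indic (Icc (0:ℝ) v ×ˢ Ioc u 1) ts * f (philow v ts.1, 1))
  | 1, f, ts =>
      (u * (1 - v)) ^ betaQ *
        (indic (Ioc v 1 ×ˢ Icc (0:ℝ) u) ts * f (phihigh v ts.1, philow u ts.2) +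
          indic (Ioc v 1 ×ˢ Ioc u 1) ts * f (phihigh v ts.1, 1))
  | 2, f, ts =>
      ((1 - u) * v) ^ betaQ * indic (Icc (0:ℝ) v ×ˢ Ioc u 1) ts *
        f (philow v ts.1, phihigh u ts.2)
  | 3, f, ts =>
      ((1 - u) * (1 - v)) ^ betaQ * indic (Ioc v 1 ×ˢ Ioc u 1) ts *
        f (phihigh v ts.1, phihigh u ts.2)

/-- `A_r`, `r = 1,…,4`. -/
def Acoef (u v : ℝ) : Fin 4 → ℝ
  | 0 => u * v
  | 1 => u * (1 - v)
  | 2 => (1 - u) * v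
  | 3 => (1 - u) * (1 - v)

/-- `Q_r^{(1)}`. -/
def proj1Set (u : ℝ) : Fin 4 → Set ℝ
  | 0 => Icc 0 u
  | 1 => Icc 0 u
  | 2 => Ioc u 1
  | 3 => Ioc u 1

/-- `Q_r^{(2)}`. -/
def proj2Set (v : ℝ) : Fin 4 → Set ℝ
  | 0 => Icc 0 v
  | 1 => Ioc v 1
  | 2 => Icc 0 v
  | 3 => Ioc v 1

/-- `φ_r`. -/
def phiH (u : ℝ) : Fin 4 → ℝ → ℝ
  | 0 => philow u
  | 1 => philow u
  | 2 => phihigh u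
  | 3 => phihigh u

/-- `φ'_r`. -/
def phiV (v : ℝ) : Fin 4 → ℝ → ℝ
  | 0 => philow v
  | 1 => phihigh v
  | 2 => philow v
  | 3 => phihigh v

/-- `π_r`, lower version: `min(x,u)/u`. -/
def piLow (u x : ℝ) : ℝ := min x u / u
/-- `π_r`, upper version: `max(x−u,0)/(1−u)`. -/
def piHigh (u x : ℝ) : ℝ := max (x - u) 0 / (1 - u)

/-- The random linear operators `D₁,…,D₄` on `C₄⁺`, built from a splitting point `(u,v)`. -/
def Dop (u v : ℝ) : Fin 4 → ((ℝ × ℝ × ℝ × ℝ) → ℝ) → (ℝ × ℝ × ℝ × ℝ) → ℝ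
  | 0, f, q =>
      (u * v) ^ betaQ * (if q.1 ≤ u ∧ q.2.2.1 ≤ v then (1:ℝ) else 0) *
        f (piLow u q.1, piLow u q.2.1, piLow v q.2.2.1, piLow v q.2.2.2)
  | 1, f, q =>
      (u * (1 - v)) ^ betaQ * (if q.1 ≤ u ∧ v < q.2.2.2 then (1:ℝ) else 0) *
        f (piLow u q.1, piLow u q.2.1, piHigh v q.2.2.1, piHigh v q.2.2.2)
  | 2, f, q =>
      ((1 - u) * v) ^ betaQ * (if u < q.2.1 ∧ q.2.2.1 ≤ v then (1:ℝ) else 0) *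
        f (piHigh u q.1, piHigh u q.2.1, piLow v q.2.2.1, piLow v q.2.2.2)
  | 3, f, q =>
      ((1 - u) * (1 - v)) ^ betaQ * (if u < q.2.1 ∧ v < q.2.2.2 then (1:ℝ) else 0) *
        f (piHigh u q.1, piHigh u q.2.1, piHigh v q.2.2.1, piHigh v q.2.2.2)

/-- The coordinate swap `λ(a,b,c,d) = (c,d,a,b)`. -/
def lamSwap (q : ℝ × ℝ × ℝ × ℝ) : ℝ × ℝ × ℝ × ℝ := (q.2.2.1, q.2.2.2, q.1, q.2.1)

/-- The random linear operators `D₁^=, D₂^=` on `C₄⁺`, built from a split `v`. -/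
def DeqOp (v : ℝ) : Fin 2 → ((ℝ × ℝ × ℝ × ℝ) → ℝ) → (ℝ × ℝ × ℝ × ℝ) → ℝ
  | 0, f, q =>
      v ^ betaQ * (if q.2.2.1 ≤ v then (1:ℝ) else 0) *
        f (q.1, q.2.1, q.2.2.1 / v, min q.2.2.2 v / v)
  | 1, f, q =>
      (1 - v) ^ betaQ * (if v < q.2.2.2 then (1:ℝ) else 0) *
        f (q.1, q.2.1, max (q.2.2.1 - v) 0 / (1 - v), (q.2.2.2 - v) / (1 - v))

/-- The operator `G*`. -/
def Gstar (y : ℝ → ℝ) (s : ℝ) : ℝ :=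
  ((betaQ + 1) / 2) *
      ((∫ v in s..1, v ^ betaQ * y (s / v)) +
        ∫ v in (0:ℝ)..s, (1 - v) ^ betaQ * y ((s - v) / (1 - v))) +
    s ^ (betaQ + 1) / 2

theorem betaQ_nonneg : 0 ≤ betaQ := by
  rw [betaQ, le_div_iff₀ two_pos, zero_mul, sub_nonneg]
  exact Real.le_sqrt_of_sq_le (by norm_num)

theorem aemeasurable_comp_of_mapsTo {α β γ : Type*} [MeasurableSpace α] [MeasurableSpace β]
    [MeasurableSpace γ] {μ : Measure α} {s : Set α} {A : Set β} {y : β → γ} {ψ : α → β}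
    (hs : MeasurableSet s) (hy : Measurable (A.restrict y)) (hψ : Measurable ψ)
    (hmaps : MapsTo ψ s A) : AEMeasurable (fun x => y (ψ x)) (μ.restrict s) :=
  aemeasurable_restrict_of_measurable_subtype hs <|
    hy.comp ((hψ.comp measurable_subtype_coe).subtype_mk (h := fun x => hmaps x.2))

section RpowWeightedIntegral

variable {b t C : ℝ} {f : ℝ → ℝ}

theorem intervalIntegrable_rpow_mul_of_bdd (hb : -1 < b) (ht1 : t ≤ 1)
    (hf : AEStronglyMeasurable f (volume.restrict (Ioc t 1)))
    (hC : ∀ w ∈ Ioc t 1, |f w| ≤ C) :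
    IntervalIntegrable (fun w => w ^ b * f w) volume t 1 := by
  rw [intervalIntegrable_iff_integrableOn_Ioc_of_le ht1]
  refine ((intervalIntegral.intervalIntegrable_rpow' hb).1).mul_bdd (c := C) hf ?_
  exact (ae_restrict_iff' measurableSet_Ioc).2 (ae_of_all _ hC)

theorem abs_integral_rpow_mul_le (hb : -1 < b) (ht : 0 ≤ t) (ht1 : t ≤ 1)
    (hC : ∀ w ∈ Ioc t 1, |f w| ≤ C) :
    |∫ w in t..1, w ^ b * f w| ≤ C * ((1 - t ^ (b + 1)) / (b + 1)) := by
  have hbound : IntervalIntegrable (fun w : ℝ => w ^ b * C) volume t 1 :=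
    (intervalIntegral.intervalIntegrable_rpow' hb).mul_const C
  calc |∫ w in t..1, w ^ b * f w| ≤ ∫ w in t..1, w ^ b * C := by
        refine (Real.norm_eq_abs _).symm.trans_le <|
          intervalIntegral.norm_integral_le_of_norm_le ht1 (ae_of_all _ fun w hw => ?_) hbound
        have hw0 : 0 ≤ w ^ b := Real.rpow_nonneg (ht.trans hw.1.le) b
        rw [Real.norm_eq_abs, abs_mul, abs_of_nonneg hw0]
        exact mul_le_mul_of_nonneg_left (hC w hw) hw0
    _ = C * ((1 - t ^ (b + 1)) / (b + 1)) := by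
        rw [intervalIntegral.integral_mul_const, integral_rpow (Or.inl hb), Real.one_rpow, mul_comm]

theorem abs_integral_rpow_mul_comp_sub_le {A : Set ℝ} {y₁ y₂ ψ : ℝ → ℝ} {M₁ M₂ : ℝ}
    (hb : -1 < b) (ht : 0 ≤ t) (ht1 : t ≤ 1) (hy₁ : Measurable (A.restrict y₁))
    (hy₂ : Measurable (A.restrict y₂)) (hψ : Measurable ψ) (hmaps : MapsTo ψ (Ioc t 1) A)
    (hM₁ : ∀ x ∈ A, |y₁ x| ≤ M₁) (hM₂ : ∀ x ∈ A, |y₂ x| ≤ M₂)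
    (hC : ∀ x ∈ A, |y₁ x - y₂ x| ≤ C) :
    |(∫ w in t..1, w ^ b * y₁ (ψ w)) - ∫ w in t..1, w ^ b * y₂ (ψ w)| ≤
      C * ((1 - t ^ (b + 1)) / (b + 1)) := by
  have hint : ∀ {y : ℝ → ℝ} {M : ℝ}, Measurable (A.restrict y) →
      (∀ x ∈ A, |y x| ≤ M) →
      IntervalIntegrable (fun w => w ^ b * y (ψ w)) volume t 1 := fun hy hM =>
    intervalIntegrable_rpow_mul_of_bdd hb ht1
      (aemeasurable_comp_of_mapsTo measurableSet_Ioc hy hψ hmaps).aestronglyMeasurable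
      fun w hw => hM _ (hmaps hw)
  rw [← intervalIntegral.integral_sub (hint hy₁ hM₁) (hint hy₂ hM₂)]
  simp_rw [← mul_sub]
  exact abs_integral_rpow_mul_le hb ht ht1 fun w hw => hC _ (hmaps hw)

end RpowWeightedIntegral

theorem two_mul_two_rpow_neg_le_rpow_add_rpow_one_sub {p s : ℝ} (hp : 1 ≤ p)
    (hs : s ∈ Icc (0:ℝ) 1) : 2 * 2 ^ (-p) ≤ s ^ p + (1 - s) ^ p := by
  have hconv := (convexOn_rpow hp).2 (mem_Ici.2 hs.1) (mem_Ici.2 (sub_nonneg.2 hs.2))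
    (by norm_num : (0:ℝ) ≤ 1 / 2) (by norm_num : (0:ℝ) ≤ 1 / 2) (add_halves 1)
  simp only [smul_eq_mul] at hconv
  rw [show 1 / 2 * s + 1 / 2 * (1 - s) = (2⁻¹ : ℝ) by ring, Real.inv_rpow zero_le_two,
    ← Real.rpow_neg zero_le_two] at hconv
  linarith

theorem integral_one_sub_rpow_mul_eq (b s : ℝ) (y : ℝ → ℝ) :
    ∫ v in (0:ℝ)..s, (1 - v) ^ b * y ((s - v) / (1 - v)) =
      ∫ w in (1 - s)..1, w ^ b * y ((w - (1 - s)) / w) := by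
  have hsub := intervalIntegral.integral_comp_sub_left
    (fun w => w ^ b * y ((w - (1 - s)) / w)) 1 (a := 0) (b := s)
  rw [sub_zero] at hsub
  rw [← hsub]
  congr 1 with v
  rw [show 1 - v - (1 - s) = s - v by ring]

theorem mapsTo_div_Ioc {s : ℝ} (hs : 0 ≤ s) :
    MapsTo (fun v => s / v) (Ioc s 1) (Icc 0 1) := fun _ hv =>
  ⟨div_nonneg hs (hs.trans hv.1.le), div_le_one_of_le₀ hv.1.le (hs.trans hv.1.le)⟩

theorem mapsTo_sub_div_Ioc {t : ℝ} (ht : 0 ≤ t) :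
    MapsTo (fun w => (w - t) / w) (Ioc t 1) (Icc 0 1) := fun _ hw =>
  ⟨div_nonneg (sub_nonneg.2 hw.1.le) (ht.trans hw.1.le),
    div_le_one_of_le₀ (sub_le_self _ ht) (ht.trans hw.1.le)⟩

theorem abs_Gstar_sub_le {g₁ g₂ : ℝ → ℝ} {M₁ M₂ M s : ℝ}
    (hg₁ : Measurable ((Icc (0:ℝ) 1).restrict g₁)) (hg₂ : Measurable ((Icc (0:ℝ) 1).restrict g₂))
    (hM₁ : ∀ x ∈ Icc (0:ℝ) 1, |g₁ x| ≤ M₁) (hM₂ : ∀ x ∈ Icc (0:ℝ) 1, |g₂ x| ≤ M₂)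
    (hM : ∀ x ∈ Icc (0:ℝ) 1, |g₁ x - g₂ x| ≤ M) (hs : s ∈ Icc (0:ℝ) 1) :
    |Gstar g₁ s - Gstar g₂ s| ≤ (1 - 2 ^ (-betaQ - 1)) * M := by
  have hβ : -1 < betaQ := by linarith [betaQ_nonneg]
  have hβ₁ : 0 < betaQ + 1 := by linarith
  have h₁ := abs_integral_rpow_mul_comp_sub_le hβ hs.1 hs.2 hg₁ hg₂ (by fun_prop)
    (mapsTo_div_Ioc hs.1) hM₁ hM₂ hM
  have h₂ := abs_integral_rpow_mul_comp_sub_le hβ (sub_nonneg.2 hs.2) (sub_le_self _ hs.1)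
    hg₁ hg₂ (by fun_prop) (mapsTo_sub_div_Ioc (sub_nonneg.2 hs.2)) hM₁ hM₂ hM
  rw [← integral_one_sub_rpow_mul_eq, ← integral_one_sub_rpow_mul_eq] at h₂
  have hconv := two_mul_two_rpow_neg_le_rpow_add_rpow_one_sub (p := betaQ + 1)
    (le_add_of_nonneg_left betaQ_nonneg) hs
  have hM₀ : 0 ≤ M := (abs_nonneg _).trans (hM s hs)
  have hdiff : Gstar g₁ s - Gstar g₂ s = (betaQ + 1) / 2 *
      (((∫ v in s..1, v ^ betaQ * g₁ (s / v)) - ∫ v in s..1, v ^ betaQ * g₂ (s / v)) +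
        ((∫ v in (0:ℝ)..s, (1 - v) ^ betaQ * g₁ ((s - v) / (1 - v))) -
          ∫ v in (0:ℝ)..s, (1 - v) ^ betaQ * g₂ ((s - v) / (1 - v)))) := by
    unfold Gstar; ring
  rw [hdiff, abs_mul, abs_of_pos (half_pos hβ₁), ← neg_add']
  calc (betaQ + 1) / 2 * |_ + _|
      ≤ (betaQ + 1) / 2 * (M * ((1 - s ^ (betaQ + 1)) / (betaQ + 1)) +
          M * ((1 - (1 - s) ^ (betaQ + 1)) / (betaQ + 1))) :=
        mul_le_mul_of_nonneg_left ((abs_add_le _ _).trans (add_le_add h₁ h₂)) (half_pos hβ₁).le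
    _ = M * (1 - (s ^ (betaQ + 1) + (1 - s) ^ (betaQ + 1)) / 2) := by
        field_simp [hβ₁.ne']
        ring
    _ ≤ (1 - 2 ^ (-(betaQ + 1))) * M := by nlinarith

/-- The operator `G*` is a contraction with factor `1 − 2^{−β−1}` on
bounded Borel-measurable functions on `[0,1]`, in the supremum norm. -/
theorem stmt17 (g1 g2 : ℝ → ℝ)
    (hg1meas : Measurable ((Icc (0:ℝ) 1).restrict g1))
    (hg2meas : Measurable ((Icc (0:ℝ) 1).restrict g2))
    (hg1bdd : ∃ M : ℝ, ∀ s ∈ Icc (0:ℝ) 1, |g1 s| ≤ M)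
    (hg2bdd : ∃ M : ℝ, ∀ s ∈ Icc (0:ℝ) 1, |g2 s| ≤ M) :
    (⨆ s : Icc (0:ℝ) 1, |Gstar g1 s - Gstar g2 s|)
      ≤ (1 - 2 ^ (-betaQ - 1)) * ⨆ s : Icc (0:ℝ) 1, |g1 s - g2 s| := by
  obtain ⟨M1, hM1⟩ := hg1bdd
  obtain ⟨M2, hM2⟩ := hg2bdd
  have hbdd : BddAbove (range fun s : Icc (0:ℝ) 1 => |g1 s - g2 s|) := by
    refine ⟨M1 + M2, ?_⟩
    rintro _ ⟨s, rfl⟩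
    exact (abs_sub _ _).trans (add_le_add (hM1 s s.2) (hM2 s s.2))
  have : Nonempty (Icc (0:ℝ) 1) := (nonempty_Icc.2 zero_le_one).to_subtype
  exact ciSup_le fun s =>
    abs_Gstar_sub_le hg1meas hg2meas hM1 hM2 (fun x hx => le_ciSup hbdd ⟨x, hx⟩) s.2

end Quadtree
end
end

section
/- There exists exactly one bounded Borel-measurable function g : [0,1] → ℝ satisfying g = G*(g), i.e. g(s) = ((β+1)/2)·(∫_s^1 v^β g(s/v) dv + ∫_0^s (1−v)^β g((s−v)/(1−v)) dv) + s^{β+1}/2 for all s ∈ [0,1]. Moreover, this g is continuous, monotonically increasing, a bijection of [0,1] onto [0,1], and satisfies g(s) = 1 − g(1−s) for every s ∈ [0,1]. -/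
open MeasureTheory Set Filter Topology ProbabilityTheory
open scoped Classical

noncomputable section

namespace Quadtree

/-!
`G*` is affine, and its linear part is positive with total mass
`1 - (s^{β+1} + (1-s)^{β+1})/2 ≤ 1 - 2^{-(β+2)}` at `s`. Hence `G*` is a contraction for the
supremum norm on `[0,1]`: this gives uniqueness among bounded measurable functions and, since `G*`
maps continuous functions to continuous ones, existence by Banach's fixed point theorem in
`C([0,1])`. `G*` preserves the closed set of nonnegative nondecreasing `f` with
`f(s) + f(1-s) = 1` (substitute `w = 1 - v` in the second integral), so the fixed point `g` lies
there. Finally `G*(g)(0) = g(0)/2` forces `g(0) = 0`, `G*(g)(s) ≥ s^{β+1}/2` makes `g` positive on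
`(0,1]`, hence `< 1` on `[0,1)` by symmetry, and that makes `g = G*(g)` strictly increasing;
the intermediate value theorem gives surjectivity.
-/

open intervalIntegral

lemma betaQ_pos : 0 < betaQ := by
  have : (3:ℝ) < Real.sqrt 17 := by
    rw [Real.lt_sqrt (by norm_num)]
    norm_num
  unfold betaQ
  linarith

def BoundedMeasurable (y : ℝ → ℝ) : Prop := Measurable y ∧ ∃ M, ∀ x, |y x| ≤ M

namespace BoundedMeasurable

lemma const (c : ℝ) : BoundedMeasurable fun _ => c := ⟨measurable_const, |c|, fun _ => le_rfl⟩

lemma sub {y₁ y₂ : ℝ → ℝ} (h₁ : BoundedMeasurable y₁) (h₂ : BoundedMeasurable y₂) :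
    BoundedMeasurable (y₁ - y₂) := by
  obtain ⟨hm₁, M₁, hM₁⟩ := h₁
  obtain ⟨hm₂, M₂, hM₂⟩ := h₂
  exact ⟨hm₁.sub hm₂, M₁ + M₂, fun x => (abs_sub _ _).trans (add_le_add (hM₁ x) (hM₂ x))⟩

end BoundedMeasurable

lemma intervalIntegrable_of_abs_le {f : ℝ → ℝ} {a b C : ℝ} (hf : Measurable f)
    (h : ∀ v ∈ uIoc a b, |f v| ≤ C) : IntervalIntegrable f volume a b :=
  (intervalIntegrable_const (c := C)).mono_fun' hf.aestronglyMeasurable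
    ((ae_restrict_iff' measurableSet_uIoc).2 (ae_of_all _ h))

lemma abs_rpow_mul_le {β w z C : ℝ} (hβ : 0 ≤ β) (hw : w ∈ Icc (0:ℝ) 1) (hz : |z| ≤ C) :
    |w ^ β * z| ≤ C := by
  rw [abs_mul, abs_of_nonneg (Real.rpow_nonneg hw.1 β)]
  exact (mul_le_of_le_one_left (abs_nonneg z) (Real.rpow_le_one hw.1 hw.2 hβ)).trans hz

section Operator

variable {β : ℝ} {y y₁ y₂ : ℝ → ℝ} {s s₁ s₂ D : ℝ}

def lowerIntegral (β : ℝ) (y : ℝ → ℝ) (s : ℝ) : ℝ := ∫ v in s..1, v ^ β * y (s / v)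

def upperIntegral (β : ℝ) (y : ℝ → ℝ) (s : ℝ) : ℝ :=
  ∫ v in (0:ℝ)..s, (1 - v) ^ β * y ((s - v) / (1 - v))

def Gop (β : ℝ) (y : ℝ → ℝ) (s : ℝ) : ℝ :=
  (β + 1) / 2 * (lowerIntegral β y s + upperIntegral β y s) + s ^ (β + 1) / 2

lemma Gstar_eq_Gop : Gstar = Gop betaQ := rfl

lemma div_mem_Icc_of_le {s v : ℝ} (hs : 0 ≤ s) (hsv : s ≤ v) : s / v ∈ Icc (0:ℝ) 1 :=
  unitInterval.div_mem hs (hs.trans hsv) hsv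

lemma sub_div_one_sub_mem_Icc {s v : ℝ} (hvs : v ≤ s) (hs : s ≤ 1) :
    (s - v) / (1 - v) ∈ Icc (0:ℝ) 1 :=
  unitInterval.div_mem (sub_nonneg.2 hvs) (by linarith) (by linarith)

lemma intervalIntegrable_lowerIntegrand (hβ : 0 ≤ β) (hy : BoundedMeasurable y) (s : ℝ)
    {a b : ℝ} (ha : a ∈ Icc (0:ℝ) 1) (hb : b ∈ Icc (0:ℝ) 1) :
    IntervalIntegrable (fun v => v ^ β * y (s / v)) volume a b := by
  obtain ⟨hm, M, hM⟩ := hy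
  exact intervalIntegrable_of_abs_le (by fun_prop) fun v hv =>
    abs_rpow_mul_le hβ (uIcc_subset_Icc ha hb (uIoc_subset_uIcc hv)) (hM _)

lemma intervalIntegrable_upperIntegrand (hβ : 0 ≤ β) (hy : BoundedMeasurable y) (s : ℝ)
    {a b : ℝ} (ha : a ∈ Icc (0:ℝ) 1) (hb : b ∈ Icc (0:ℝ) 1) :
    IntervalIntegrable (fun v => (1 - v) ^ β * y ((s - v) / (1 - v))) volume a b := by
  obtain ⟨hm, M, hM⟩ := hy
  refine intervalIntegrable_of_abs_le (C := M) (by fun_prop) fun v hv => ?_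
  exact abs_rpow_mul_le hβ (Icc.one_sub_mem (uIcc_subset_Icc ha hb (uIoc_subset_uIcc hv))) (hM _)

lemma lowerIntegral_const (hβ : -1 < β) (c s : ℝ) :
    lowerIntegral β (fun _ => c) s = c * (1 - s ^ (β + 1)) / (β + 1) := by
  rw [lowerIntegral, intervalIntegral.integral_mul_const, integral_rpow (Or.inl hβ), Real.one_rpow]
  ring

lemma upperIntegral_const (hβ : -1 < β) (c s : ℝ) :
    upperIntegral β (fun _ => c) s = c * (1 - (1 - s) ^ (β + 1)) / (β + 1) := by
  rw [upperIntegral, intervalIntegral.integral_mul_const, integral_comp_sub_left (fun v => v ^ β),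
    integral_rpow (Or.inl hβ), sub_zero, Real.one_rpow]
  ring

lemma lowerIntegral_sub (hβ : 0 ≤ β) (hy₁ : BoundedMeasurable y₁) (hy₂ : BoundedMeasurable y₂)
    (hs : s ∈ Icc (0:ℝ) 1) :
    lowerIntegral β (y₁ - y₂) s = lowerIntegral β y₁ s - lowerIntegral β y₂ s := by
  simp only [lowerIntegral, Pi.sub_apply, mul_sub]
  exact integral_sub (intervalIntegrable_lowerIntegrand hβ hy₁ s hs ⟨zero_le_one, le_rfl⟩)
    (intervalIntegrable_lowerIntegrand hβ hy₂ s hs ⟨zero_le_one, le_rfl⟩)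

lemma upperIntegral_sub (hβ : 0 ≤ β) (hy₁ : BoundedMeasurable y₁) (hy₂ : BoundedMeasurable y₂)
    (hs : s ∈ Icc (0:ℝ) 1) :
    upperIntegral β (y₁ - y₂) s = upperIntegral β y₁ s - upperIntegral β y₂ s := by
  simp only [upperIntegral, Pi.sub_apply, mul_sub]
  exact integral_sub (intervalIntegrable_upperIntegrand hβ hy₁ s ⟨le_rfl, zero_le_one⟩ hs)
    (intervalIntegrable_upperIntegrand hβ hy₂ s ⟨le_rfl, zero_le_one⟩ hs)

lemma lowerIntegral_mono (hβ : 0 ≤ β) (hy₁ : BoundedMeasurable y₁) (hy₂ : BoundedMeasurable y₂)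
    (h : ∀ x ∈ Icc (0:ℝ) 1, y₁ x ≤ y₂ x) (hs : s ∈ Icc (0:ℝ) 1) :
    lowerIntegral β y₁ s ≤ lowerIntegral β y₂ s :=
  integral_mono_on hs.2 (intervalIntegrable_lowerIntegrand hβ hy₁ s hs ⟨zero_le_one, le_rfl⟩)
    (intervalIntegrable_lowerIntegrand hβ hy₂ s hs ⟨zero_le_one, le_rfl⟩) fun _ hv =>
    mul_le_mul_of_nonneg_left (h _ (div_mem_Icc_of_le hs.1 hv.1))
      (Real.rpow_nonneg (hs.1.trans hv.1) β)

lemma upperIntegral_mono (hβ : 0 ≤ β) (hy₁ : BoundedMeasurable y₁) (hy₂ : BoundedMeasurable y₂)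
    (h : ∀ x ∈ Icc (0:ℝ) 1, y₁ x ≤ y₂ x) (hs : s ∈ Icc (0:ℝ) 1) :
    upperIntegral β y₁ s ≤ upperIntegral β y₂ s :=
  integral_mono_on hs.1 (intervalIntegrable_upperIntegrand hβ hy₁ s ⟨le_rfl, zero_le_one⟩ hs)
    (intervalIntegrable_upperIntegrand hβ hy₂ s ⟨le_rfl, zero_le_one⟩ hs) fun v hv =>
    mul_le_mul_of_nonneg_left (h _ (sub_div_one_sub_mem_Icc hv.2 hs.2))
      (Real.rpow_nonneg (by linarith [hv.2, hs.2]) β)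

lemma abs_lowerIntegral_le (hβ : 0 ≤ β) (hy : BoundedMeasurable y)
    (hD : ∀ x ∈ Icc (0:ℝ) 1, |y x| ≤ D) (hs : s ∈ Icc (0:ℝ) 1) :
    |lowerIntegral β y s| ≤ D * (1 - s ^ (β + 1)) / (β + 1) := by
  have hlo := lowerIntegral_mono hβ (.const (-D)) hy (fun x hx => neg_le_of_abs_le (hD x hx)) hs
  have hhi := lowerIntegral_mono hβ hy (.const D) (fun x hx => le_of_abs_le (hD x hx)) hs
  rw [lowerIntegral_const (by linarith), neg_mul, neg_div] at hlo
  rw [lowerIntegral_const (by linarith)] at hhi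
  exact abs_le.2 ⟨by linarith, hhi⟩

lemma abs_upperIntegral_le (hβ : 0 ≤ β) (hy : BoundedMeasurable y)
    (hD : ∀ x ∈ Icc (0:ℝ) 1, |y x| ≤ D) (hs : s ∈ Icc (0:ℝ) 1) :
    |upperIntegral β y s| ≤ D * (1 - (1 - s) ^ (β + 1)) / (β + 1) := by
  have hlo := upperIntegral_mono hβ (.const (-D)) hy (fun x hx => neg_le_of_abs_le (hD x hx)) hs
  have hhi := upperIntegral_mono hβ hy (.const D) (fun x hx => le_of_abs_le (hD x hx)) hs
  rw [upperIntegral_const (by linarith), neg_mul, neg_div] at hlo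
  rw [upperIntegral_const (by linarith)] at hhi
  exact abs_le.2 ⟨by linarith, hhi⟩

lemma half_rpow_le_rpow_add_rpow_one_sub {p : ℝ} (hp : 0 ≤ p) (hs : s ∈ Icc (0:ℝ) 1) :
    (1 / 2 : ℝ) ^ p ≤ s ^ p + (1 - s) ^ p := by
  have h₀ := Real.rpow_nonneg hs.1 p
  have h₁ := Real.rpow_nonneg (sub_nonneg.2 hs.2) p
  rcases le_total s (1 / 2) with h | h
  · linarith [Real.rpow_le_rpow (by norm_num) (by linarith : (1 / 2 : ℝ) ≤ 1 - s) hp]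
  · linarith [Real.rpow_le_rpow (by norm_num) h hp]

lemma one_sub_half_rpow_mem_Ico {p : ℝ} (hp : 0 ≤ p) : 1 - (1 / 2 : ℝ) ^ p ∈ Ico (0:ℝ) 1 :=
  ⟨sub_nonneg.2 (Real.rpow_le_one (by norm_num) (by norm_num) hp),
    sub_lt_self _ (Real.rpow_pos_of_pos (by norm_num) p)⟩

/-- The weights of the two integrals add up to `1 - (s^{β+1} + (1-s)^{β+1})/2`, and
`s^{β+1} + (1-s)^{β+1} ≥ 2^{-(β+1)}`. -/
lemma abs_Gop_sub_Gop_le (hβ : 0 ≤ β) (hy₁ : BoundedMeasurable y₁) (hy₂ : BoundedMeasurable y₂)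
    (hD : ∀ x ∈ Icc (0:ℝ) 1, |y₁ x - y₂ x| ≤ D) (hs : s ∈ Icc (0:ℝ) 1) :
    |Gop β y₁ s - Gop β y₂ s| ≤ (1 - (1 / 2) ^ (β + 2)) * D := by
  have hlow := abs_lowerIntegral_le hβ (hy₁.sub hy₂) hD hs
  have hupp := abs_upperIntegral_le hβ (hy₁.sub hy₂) hD hs
  rw [lowerIntegral_sub hβ hy₁ hy₂ hs] at hlow
  rw [upperIntegral_sub hβ hy₁ hy₂ hs] at hupp
  have hD₀ : 0 ≤ D := (abs_nonneg _).trans (hD 0 ⟨le_rfl, zero_le_one⟩)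
  have hsum := half_rpow_le_rpow_add_rpow_one_sub (by linarith : 0 ≤ β + 1) hs
  have hhalf : (1 / 2 : ℝ) ^ (β + 2) = (1 / 2) ^ (β + 1) / 2 := by
    rw [show β + 2 = (β + 1) + 1 by ring, Real.rpow_add_one (by norm_num)]
    ring
  have hcoef : 0 < (β + 1) / 2 := by linarith
  calc |Gop β y₁ s - Gop β y₂ s|
      = (β + 1) / 2 * |(lowerIntegral β y₁ s - lowerIntegral β y₂ s)
          + (upperIntegral β y₁ s - upperIntegral β y₂ s)| := by
        rw [← abs_of_pos hcoef, ← abs_mul, Gop, Gop]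
        ring_nf
    _ ≤ (β + 1) / 2 * (D * (1 - s ^ (β + 1)) / (β + 1)
          + D * (1 - (1 - s) ^ (β + 1)) / (β + 1)) := by
        gcongr
        exact (abs_add_le _ _).trans (add_le_add hlow hupp)
    _ = D - D * (s ^ (β + 1) + (1 - s) ^ (β + 1)) / 2 := by
        field_simp
        ring
    _ ≤ (1 - (1 / 2) ^ (β + 2)) * D := by
        rw [hhalf]
        nlinarith [mul_le_mul_of_nonneg_left hsum hD₀]

lemma lowerIntegral_nonneg (hy : ∀ x ∈ Icc (0:ℝ) 1, 0 ≤ y x) (hs : s ∈ Icc (0:ℝ) 1) :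
    0 ≤ lowerIntegral β y s :=
  integral_nonneg hs.2 fun _ hv =>
    mul_nonneg (Real.rpow_nonneg (hs.1.trans hv.1) β) (hy _ (div_mem_Icc_of_le hs.1 hv.1))

lemma upperIntegral_nonneg (hy : ∀ x ∈ Icc (0:ℝ) 1, 0 ≤ y x) (hs : s ∈ Icc (0:ℝ) 1) :
    0 ≤ upperIntegral β y s :=
  integral_nonneg hs.1 fun _ hv =>
    mul_nonneg (Real.rpow_nonneg (by linarith [hv.2, hs.2]) β)
      (hy _ (sub_div_one_sub_mem_Icc hv.2 hs.2))

lemma rpow_div_two_le_Gop (hβ : -1 < β) (hy : ∀ x ∈ Icc (0:ℝ) 1, 0 ≤ y x)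
    (hs : s ∈ Icc (0:ℝ) 1) : s ^ (β + 1) / 2 ≤ Gop β y s := by
  have := mul_nonneg (by linarith : 0 ≤ (β + 1) / 2)
    (add_nonneg (lowerIntegral_nonneg (β := β) hy hs) (upperIntegral_nonneg (β := β) hy hs))
  rw [Gop]
  linarith

lemma Gop_zero (hβ : -1 < β) (y : ℝ → ℝ) : Gop β y 0 = y 0 / 2 := by
  have hlow : lowerIntegral β y 0 = lowerIntegral β (fun _ => y 0) 0 := by
    simp only [lowerIntegral, zero_div]
  rw [Gop, hlow, lowerIntegral_const hβ, upperIntegral, integral_same,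
    Real.zero_rpow (by linarith)]
  have : β + 1 ≠ 0 := by linarith
  field_simp
  ring

lemma Gop_congr (h : ∀ x ∈ Icc (0:ℝ) 1, y₁ x = y₂ x) (hs : s ∈ Icc (0:ℝ) 1) :
    Gop β y₁ s = Gop β y₂ s := by
  have hlow : lowerIntegral β y₁ s = lowerIntegral β y₂ s :=
    integral_congr fun v hv => by
      rw [uIcc_of_le hs.2] at hv
      simp only [h _ (div_mem_Icc_of_le hs.1 hv.1)]
  have hupp : upperIntegral β y₁ s = upperIntegral β y₂ s :=
    integral_congr fun v hv => by
      rw [uIcc_of_le hs.1] at hv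
      simp only [h _ (sub_div_one_sub_mem_Icc hv.2 hs.2)]
  rw [Gop, Gop, hlow, hupp]

lemma lowerIntegral_le_add (hβ : 0 ≤ β) (hy : BoundedMeasurable y)
    (hmono : MonotoneOn y (Icc 0 1)) (hs₁ : 0 ≤ s₁) (h₁₂ : s₁ ≤ s₂) (hs₂ : s₂ ≤ 1) :
    lowerIntegral β y s₁ ≤ (∫ v in s₁..s₂, v ^ β * y (s₁ / v)) + lowerIntegral β y s₂ := by
  have hs₁' : s₁ ∈ Icc (0:ℝ) 1 := ⟨hs₁, h₁₂.trans hs₂⟩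
  have hs₂' : s₂ ∈ Icc (0:ℝ) 1 := ⟨hs₁.trans h₁₂, hs₂⟩
  have h1 : (1:ℝ) ∈ Icc (0:ℝ) 1 := ⟨zero_le_one, le_rfl⟩
  rw [lowerIntegral, ← integral_add_adjacent_intervals
    (intervalIntegrable_lowerIntegrand hβ hy s₁ hs₁' hs₂')
    (intervalIntegrable_lowerIntegrand hβ hy s₁ hs₂' h1)]
  gcongr
  refine integral_mono_on hs₂ (intervalIntegrable_lowerIntegrand hβ hy s₁ hs₂' h1)
    (intervalIntegrable_lowerIntegrand hβ hy s₂ hs₂' h1) fun v hv => ?_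
  have hv₀ : 0 ≤ v := hs₂'.1.trans hv.1
  exact mul_le_mul_of_nonneg_left (hmono (div_mem_Icc_of_le hs₁ (h₁₂.trans hv.1))
    (div_mem_Icc_of_le hs₂'.1 hv.1) (div_le_div_of_nonneg_right h₁₂ hv₀))
    (Real.rpow_nonneg hv₀ β)

lemma upperIntegral_monotoneOn (hβ : 0 ≤ β) (hy : BoundedMeasurable y)
    (hmono : MonotoneOn y (Icc 0 1)) (hy₀ : ∀ x ∈ Icc (0:ℝ) 1, 0 ≤ y x) :
    MonotoneOn (upperIntegral β y) (Icc 0 1) := by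
  intro s₁ hs₁ s₂ hs₂ h₁₂
  have h0 : (0:ℝ) ∈ Icc (0:ℝ) 1 := ⟨le_rfl, zero_le_one⟩
  rw [upperIntegral, upperIntegral, ← integral_add_adjacent_intervals
    (intervalIntegrable_upperIntegrand hβ hy s₂ h0 hs₁)
    (intervalIntegrable_upperIntegrand hβ hy s₂ hs₁ hs₂)]
  have hrest : 0 ≤ ∫ v in s₁..s₂, (1 - v) ^ β * y ((s₂ - v) / (1 - v)) :=
    integral_nonneg h₁₂ fun v hv => mul_nonneg (Real.rpow_nonneg (by linarith [hv.2, hs₂.2]) β)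
      (hy₀ _ (sub_div_one_sub_mem_Icc hv.2 hs₂.2))
  refine le_add_of_le_of_nonneg (integral_mono_on hs₁.1
    (intervalIntegrable_upperIntegrand hβ hy s₁ h0 hs₁)
    (intervalIntegrable_upperIntegrand hβ hy s₂ h0 hs₁) fun v hv => ?_) hrest
  have hv₁ : 0 ≤ 1 - v := by linarith [hv.2, hs₁.2]
  exact mul_le_mul_of_nonneg_left (hmono (sub_div_one_sub_mem_Icc hv.2 hs₁.2)
    (sub_div_one_sub_mem_Icc (hv.2.trans h₁₂) hs₂.2)
    (div_le_div_of_nonneg_right (by linarith) hv₁)) (Real.rpow_nonneg hv₁ β)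

lemma integral_le_Gop_sub_Gop (hβ : 0 ≤ β) (hy : BoundedMeasurable y)
    (hmono : MonotoneOn y (Icc 0 1)) (hy₀ : ∀ x ∈ Icc (0:ℝ) 1, 0 ≤ y x)
    (hs₁ : 0 ≤ s₁) (h₁₂ : s₁ ≤ s₂) (hs₂ : s₂ ≤ 1) :
    (β + 1) / 2 * ∫ v in s₁..s₂, v ^ β * (1 - y (s₁ / v)) ≤ Gop β y s₂ - Gop β y s₁ := by
  have hs₁' : s₁ ∈ Icc (0:ℝ) 1 := ⟨hs₁, h₁₂.trans hs₂⟩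
  have hs₂' : s₂ ∈ Icc (0:ℝ) 1 := ⟨hs₁.trans h₁₂, hs₂⟩
  have hsplit : (∫ v in s₁..s₂, v ^ β * (1 - y (s₁ / v)))
      = (s₂ ^ (β + 1) - s₁ ^ (β + 1)) / (β + 1) - ∫ v in s₁..s₂, v ^ β * y (s₁ / v) := by
    simp only [mul_sub, mul_one]
    rw [integral_sub (intervalIntegral.intervalIntegrable_rpow' (by linarith))
      (intervalIntegrable_lowerIntegrand hβ hy s₁ hs₁' hs₂'), integral_rpow (Or.inl (by linarith))]
  have hβ₁ : 0 < β + 1 := by linarith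
  have hincr := mul_le_mul_of_nonneg_left (add_le_add (lowerIntegral_le_add hβ hy hmono hs₁ h₁₂ hs₂)
    (upperIntegral_monotoneOn hβ hy hmono hy₀ hs₁' hs₂' h₁₂)) (by linarith : 0 ≤ (β + 1) / 2)
  have hpow : (β + 1) / 2 * ((s₂ ^ (β + 1) - s₁ ^ (β + 1)) / (β + 1))
      = s₂ ^ (β + 1) / 2 - s₁ ^ (β + 1) / 2 := by
    field_simp
  rw [hsplit, Gop, Gop]
  linarith

lemma Gop_monotoneOn (hβ : 0 ≤ β) (hy : BoundedMeasurable y)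
    (hmono : MonotoneOn y (Icc 0 1)) (hy₀ : ∀ x ∈ Icc (0:ℝ) 1, 0 ≤ y x)
    (hy₁ : ∀ x ∈ Icc (0:ℝ) 1, y x ≤ 1) : MonotoneOn (Gop β y) (Icc 0 1) := by
  intro s₁ hs₁ s₂ hs₂ h₁₂
  have hint : 0 ≤ ∫ v in s₁..s₂, v ^ β * (1 - y (s₁ / v)) :=
    integral_nonneg h₁₂ fun v hv => mul_nonneg (Real.rpow_nonneg (hs₁.1.trans hv.1) β)
      (sub_nonneg.2 (hy₁ _ (div_mem_Icc_of_le hs₁.1 hv.1)))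
  exact sub_nonneg.1 ((mul_nonneg (by linarith) hint).trans
    (integral_le_Gop_sub_Gop hβ hy hmono hy₀ hs₁.1 h₁₂ hs₂.2))

lemma Gop_strictMonoOn (hβ : 0 ≤ β) (hy : BoundedMeasurable y)
    (hmono : MonotoneOn y (Icc 0 1)) (hy₀ : ∀ x ∈ Icc (0:ℝ) 1, 0 ≤ y x)
    (hy₁ : ∀ x ∈ Ico (0:ℝ) 1, y x < 1) : StrictMonoOn (Gop β y) (Icc 0 1) := by
  intro s₁ hs₁ s₂ hs₂ h₁₂
  have hint : 0 < ∫ v in s₁..s₂, v ^ β * (1 - y (s₁ / v)) := by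
    refine intervalIntegral_pos_of_pos_on ?_ (fun v hv => ?_) h₁₂
    · simp only [mul_sub, mul_one]
      exact (intervalIntegral.intervalIntegrable_rpow' (by linarith)).sub
        (intervalIntegrable_lowerIntegrand hβ hy s₁ hs₁ hs₂)
    · have hv₀ : 0 < v := hs₁.1.trans_lt hv.1
      exact mul_pos (Real.rpow_pos_of_pos hv₀ β) (sub_pos.2 (hy₁ _
        ⟨div_nonneg hs₁.1 hv₀.le, (div_lt_one hv₀).2 hv.1⟩))
  exact sub_pos.1 ((mul_pos (by linarith) hint).trans_le
    (integral_le_Gop_sub_Gop hβ hy hmono hy₀ hs₁.1 h₁₂.le hs₂.2))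

lemma upperIntegral_eq_of_symm (hβ : 0 < β) (hy : BoundedMeasurable y)
    (hsymm : ∀ x ∈ Icc (0:ℝ) 1, y x + y (1 - x) = 1) (hs : s ∈ Icc (0:ℝ) 1) :
    upperIntegral β y s = (1 - (1 - s) ^ (β + 1)) / (β + 1) - lowerIntegral β y (1 - s) := by
  have hs' := Icc.one_sub_mem hs
  have hsub : upperIntegral β y s = ∫ w in (1 - s)..1, w ^ β * (1 - y ((1 - s) / w)) := by
    have hcomp := integral_comp_sub_left (fun w => w ^ β * (1 - y ((1 - s) / w))) 1 (a := 0) (b := s)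
    rw [sub_zero] at hcomp
    rw [upperIntegral, ← hcomp]
    refine integral_congr fun v hv => ?_
    rw [uIcc_of_le hs.1] at hv
    rcases eq_or_lt_of_le (hv.2.trans hs.2) with rfl | hv₁
    · simp [Real.zero_rpow hβ.ne']
    · have harg : (1 - s) / (1 - v) = 1 - (s - v) / (1 - v) := by
        field_simp [(sub_pos.2 hv₁).ne']
        ring
      have := hsymm _ (sub_div_one_sub_mem_Icc hv.2 hs.2)
      rw [harg]
      congr 1
      linarith
  rw [hsub]
  simp only [mul_sub, mul_one]
  rw [integral_sub (intervalIntegral.intervalIntegrable_rpow' (by linarith))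
    (intervalIntegrable_lowerIntegrand hβ.le hy _ hs' ⟨zero_le_one, le_rfl⟩),
    integral_rpow (Or.inl (by linarith)), Real.one_rpow, lowerIntegral]

lemma Gop_add_Gop_one_sub (hβ : 0 < β) (hy : BoundedMeasurable y)
    (hsymm : ∀ x ∈ Icc (0:ℝ) 1, y x + y (1 - x) = 1) (hs : s ∈ Icc (0:ℝ) 1) :
    Gop β y s + Gop β y (1 - s) = 1 := by
  have h₁ := upperIntegral_eq_of_symm hβ hy hsymm hs
  have h₂ := upperIntegral_eq_of_symm hβ hy hsymm (Icc.one_sub_mem hs)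
  rw [sub_sub_cancel] at h₂
  have : β + 1 ≠ 0 := by linarith
  rw [Gop, Gop, h₁, h₂]
  field_simp
  ring

lemma continuousOn_integral_of_bound {F : ℝ → ℝ → ℝ} {C : ℝ} (hF : ∀ s, Measurable (F s))
    (hbound : ∀ s ∈ Icc (0:ℝ) 1, ∀ t ∈ Ioc (0:ℝ) 1, |F s t| ≤ C)
    (hcont : ∀ t ∈ Ioo (0:ℝ) 1, ContinuousOn (fun s => F s t) (Icc 0 1)) :
    ContinuousOn (fun s => ∫ t in (0:ℝ)..1, F s t) (Icc 0 1) := by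
  intro s₀ hs₀
  refine continuousWithinAt_of_dominated_interval (bound := fun _ => C)
    (.of_forall fun s => (hF s).aestronglyMeasurable) ?_ intervalIntegrable_const ?_
  · filter_upwards [self_mem_nhdsWithin] with s hs
    exact ae_of_all _ fun t ht => hbound s hs t (by rwa [uIoc_of_le zero_le_one] at ht)
  · filter_upwards [compl_mem_ae_iff.2 (measure_singleton (1:ℝ))] with t ht₁ ht
    rw [uIoc_of_le zero_le_one] at ht
    exact hcont t ⟨ht.1, ht.2.lt_of_ne ht₁⟩ s₀ hs₀

lemma lowerIntegral_eq_mul_integral (β : ℝ) (y : ℝ → ℝ) (s : ℝ) :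
    lowerIntegral β y s
      = (1 - s) * ∫ t in (0:ℝ)..1, ((1 - s) * t + s) ^ β * y (s / ((1 - s) * t + s)) := by
  have h := smul_integral_comp_mul_add (a := 0) (b := 1) (fun v => v ^ β * y (s / v)) (1 - s) s
  rw [mul_zero, zero_add, mul_one, sub_add_cancel, smul_eq_mul] at h
  exact h.symm

lemma upperIntegral_eq_mul_integral (β : ℝ) (y : ℝ → ℝ) (s : ℝ) :
    upperIntegral β y s
      = s * ∫ t in (0:ℝ)..1, (1 - s * t) ^ β * y ((s - s * t) / (1 - s * t)) := by
  have h := smul_integral_comp_mul_left (a := 0) (b := 1)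
    (fun v => (1 - v) ^ β * y ((s - v) / (1 - v))) s
  rw [mul_zero, mul_one, smul_eq_mul] at h
  exact h.symm

lemma continuousOn_Gop (hβ : 0 ≤ β) (hy : Continuous y) (hyb : ∃ M, ∀ x, |y x| ≤ M) :
    ContinuousOn (Gop β y) (Icc 0 1) := by
  obtain ⟨M, hM⟩ := hyb
  have hlow : ContinuousOn
      (fun s => ∫ t in (0:ℝ)..1, ((1 - s) * t + s) ^ β * y (s / ((1 - s) * t + s))) (Icc 0 1) := by
    refine continuousOn_integral_of_bound (C := M) (fun s => by fun_prop)
      (fun s hs t ht => abs_rpow_mul_le hβ ⟨by nlinarith [hs.1, hs.2, ht.1], by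
        nlinarith [hs.1, hs.2, ht.2]⟩ (hM _)) fun t ht s hs => ?_
    have hpos : (1 - s) * t + s ≠ 0 := by nlinarith [hs.1, hs.2, ht.1, ht.2]
    exact ContinuousAt.continuousWithinAt (by fun_prop (disch := exact hpos))
  have hupp : ContinuousOn
      (fun s => ∫ t in (0:ℝ)..1, (1 - s * t) ^ β * y ((s - s * t) / (1 - s * t))) (Icc 0 1) := by
    refine continuousOn_integral_of_bound (C := M) (fun s => by fun_prop)
      (fun s hs t ht => abs_rpow_mul_le hβ ⟨by nlinarith [hs.1, hs.2, ht.1, ht.2], by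
        nlinarith [hs.1, ht.1]⟩ (hM _)) fun t ht s hs => ?_
    have hpos : 1 - s * t ≠ 0 := by nlinarith [hs.1, hs.2, ht.1, ht.2]
    exact ContinuousAt.continuousWithinAt (by fun_prop (disch := exact hpos))
  have hGop : ∀ s, Gop β y s = (β + 1) / 2 * ((1 - s) * (∫ t in (0:ℝ)..1,
      ((1 - s) * t + s) ^ β * y (s / ((1 - s) * t + s))) + s * ∫ t in (0:ℝ)..1,
      (1 - s * t) ^ β * y ((s - s * t) / (1 - s * t))) + s ^ (β + 1) / 2 := fun s => by
    rw [Gop, lowerIntegral_eq_mul_integral, upperIntegral_eq_mul_integral]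
  rw [show Gop β y = _ from funext hGop]
  exact (continuousOn_const.mul (((continuousOn_const.sub continuousOn_id).mul hlow).add
    (continuousOn_id.mul hupp))).add
    ((Real.continuous_rpow_const (by linarith)).continuousOn.div_const 2)

end Operator

section FixedPoint

variable {β : ℝ} {y y₁ y₂ : ℝ → ℝ}

lemma boundedMeasurable_IccExtend {f : Icc (0:ℝ) 1 → ℝ} (hf : Measurable f)
    (hb : ∃ M, ∀ x, |f x| ≤ M) : BoundedMeasurable (IccExtend zero_le_one f) :=
  ⟨hf.comp continuous_projIcc.measurable, hb.imp fun _ hM _ => hM _⟩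

lemma boundedMeasurable_IccExtend_continuousMap (f : C(Icc (0:ℝ) 1, ℝ)) :
    BoundedMeasurable (IccExtend zero_le_one f) :=
  boundedMeasurable_IccExtend f.continuous.measurable ⟨‖f‖, fun x => by
    simpa only [Real.norm_eq_abs] using f.norm_coe_le_norm x⟩

lemma eqOn_of_Gop_fixed (hβ : 0 ≤ β) (hy₁ : BoundedMeasurable y₁) (hy₂ : BoundedMeasurable y₂)
    (hfix₁ : ∀ s ∈ Icc (0:ℝ) 1, y₁ s = Gop β y₁ s) (hfix₂ : ∀ s ∈ Icc (0:ℝ) 1, y₂ s = Gop β y₂ s) :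
    EqOn y₁ y₂ (Icc 0 1) := by
  obtain ⟨M₁, hM₁⟩ := hy₁.2
  obtain ⟨M₂, hM₂⟩ := hy₂.2
  set q : ℝ := 1 - (1 / 2) ^ (β + 2)
  obtain ⟨hq₀, hq₁⟩ : q ∈ Ico (0:ℝ) 1 := one_sub_half_rpow_mem_Ico (by linarith)
  have hbound : ∀ n : ℕ, ∀ s ∈ Icc (0:ℝ) 1, |y₁ s - y₂ s| ≤ q ^ n * (M₁ + M₂) := by
    intro n
    induction n with
    | zero => exact fun s _ => by simpa using (abs_sub _ _).trans (add_le_add (hM₁ s) (hM₂ s))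
    | succ n ih =>
      intro s hs
      rw [hfix₁ s hs, hfix₂ s hs]
      exact (abs_Gop_sub_Gop_le hβ hy₁ hy₂ ih hs).trans_eq (by ring)
  intro s hs
  have hlim : Tendsto (fun n : ℕ => q ^ n * (M₁ + M₂)) atTop (𝓝 0) := by
    simpa using (tendsto_pow_atTop_nhds_zero_of_lt_one hq₀ hq₁).mul_const (M₁ + M₂)
  exact sub_eq_zero.1 (abs_nonpos_iff.1 (ge_of_tendsto' hlim fun n => hbound n s hs))

def GopC (hβ : 0 ≤ β) (f : C(Icc (0:ℝ) 1, ℝ)) : C(Icc (0:ℝ) 1, ℝ) :=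
  ⟨(Icc 0 1).domRestrict (Gop β (IccExtend zero_le_one f)),
    (continuousOn_Gop hβ (continuous_IccExtend_iff.2 f.continuous)
      (boundedMeasurable_IccExtend_continuousMap f).2).domRestrict⟩

lemma contractingWith_GopC (hβ : 0 ≤ β) :
    ContractingWith ((1:ℝ) - (1 / 2) ^ (β + 2)).toNNReal (GopC hβ) := by
  obtain ⟨hq₀, hq₁⟩ := one_sub_half_rpow_mem_Ico (p := β + 2) (by linarith)
  refine ⟨Real.toNNReal_lt_one.2 hq₁, LipschitzWith.of_dist_le_mul fun f g => ?_⟩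
  rw [Real.coe_toNNReal _ hq₀]
  refine (ContinuousMap.dist_le (mul_nonneg hq₀ dist_nonneg)).2 fun x => ?_
  refine abs_Gop_sub_Gop_le hβ (boundedMeasurable_IccExtend_continuousMap f)
    (boundedMeasurable_IccExtend_continuousMap g) (fun z hz => ?_) x.2
  rw [IccExtend_of_mem _ _ hz, IccExtend_of_mem _ _ hz, ← Real.dist_eq]
  exact ContinuousMap.dist_apply_le_dist _

def symmMonoSet : Set C(Icc (0:ℝ) 1, ℝ) :=
  {f | Monotone f ∧ (∀ x, 0 ≤ f x) ∧ ∀ x, f x + f (unitInterval.symm x) = 1}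

lemma isClosed_symmMonoSet : IsClosed symmMonoSet := by
  simp only [symmMonoSet, ofPred_and, ofPred_forall]
  exact (isClosed_monotone.preimage continuous_coeFun).inter
    ((isClosed_iInter fun x => isClosed_le continuous_const (continuous_eval_const x)).inter
      (isClosed_iInter fun x => isClosed_eq
        ((continuous_eval_const x).add (continuous_eval_const _)) continuous_const))

lemma IccExtend_add_IccExtend_one_sub {f : C(Icc (0:ℝ) 1, ℝ)} (hf : f ∈ symmMonoSet)
    {x : ℝ} (hx : x ∈ Icc (0:ℝ) 1) :
    IccExtend zero_le_one f x + IccExtend zero_le_one f (1 - x) = 1 := by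
  rw [IccExtend_of_mem _ _ hx, IccExtend_of_mem _ _ (Icc.one_sub_mem hx)]
  exact hf.2.2 ⟨x, hx⟩

lemma GopC_mem_symmMonoSet (hβ : 0 < β) {f : C(Icc (0:ℝ) 1, ℝ)} (hf : f ∈ symmMonoSet) :
    GopC hβ.le f ∈ symmMonoSet := by
  have hy := boundedMeasurable_IccExtend_continuousMap f
  have hy₀ : ∀ x ∈ Icc (0:ℝ) 1, 0 ≤ IccExtend zero_le_one f x := fun x _ => hf.2.1 _
  have hsymm : ∀ x ∈ Icc (0:ℝ) 1, IccExtend zero_le_one f x + IccExtend zero_le_one f (1 - x) = 1 :=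
    fun x hx => IccExtend_add_IccExtend_one_sub hf hx
  have hy₁ : ∀ x ∈ Icc (0:ℝ) 1, IccExtend zero_le_one f x ≤ 1 := fun x hx => by
    linarith [hsymm x hx, hy₀ (1 - x) (Icc.one_sub_mem hx)]
  refine ⟨fun a b hab => Gop_monotoneOn hβ.le hy ((hf.1.IccExtend zero_le_one).monotoneOn _)
    hy₀ hy₁ a.2 b.2 hab, fun x => ?_, fun x => Gop_add_Gop_one_sub hβ hy hsymm x.2⟩
  exact (div_nonneg (Real.rpow_nonneg x.2.1 _) zero_le_two).trans
    (rpow_div_two_le_Gop (by linarith) hy₀ x.2)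

lemma exists_Gop_fixedPoint (hβ : 0 < β) :
    ∃ g : ℝ → ℝ, Continuous g ∧ BoundedMeasurable g ∧ MonotoneOn g (Icc 0 1) ∧
      (∀ x ∈ Icc (0:ℝ) 1, 0 ≤ g x) ∧ (∀ x ∈ Icc (0:ℝ) 1, g x + g (1 - x) = 1) ∧
      ∀ s ∈ Icc (0:ℝ) 1, g s = Gop β g s := by
  have hc := contractingWith_GopC hβ.le
  have hmem : hc.fixedPoint _ ∈ symmMonoSet := by
    refine isClosed_symmMonoSet.mem_of_tendsto
      (hc.tendsto_iterate_fixedPoint (ContinuousMap.const _ (1 / 2))) (.of_forall fun n => ?_)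
    induction n with
    | zero => exact ⟨monotone_const, fun _ => by norm_num, fun _ => by norm_num⟩
    | succ n ih => rw [Function.iterate_succ_apply']; exact GopC_mem_symmMonoSet hβ ih
  refine ⟨IccExtend zero_le_one (hc.fixedPoint _), continuous_IccExtend_iff.2 (map_continuous _),
    boundedMeasurable_IccExtend_continuousMap _, (hmem.1.IccExtend zero_le_one).monotoneOn _,
    fun x _ => hmem.2.1 _, fun x hx => IccExtend_add_IccExtend_one_sub hmem hx, fun s hs => ?_⟩
  rw [IccExtend_of_mem _ _ hs]
  exact (DFunLike.congr_fun hc.fixedPoint_isFixedPt ⟨s, hs⟩).symm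

lemma bijOn_of_Gop_fixed (hβ : 0 < β) (hy : BoundedMeasurable y) (hcont : ContinuousOn y (Icc 0 1))
    (hmono : MonotoneOn y (Icc 0 1)) (hy₀ : ∀ x ∈ Icc (0:ℝ) 1, 0 ≤ y x)
    (hsymm : ∀ x ∈ Icc (0:ℝ) 1, y x + y (1 - x) = 1) (hfix : ∀ s ∈ Icc (0:ℝ) 1, y s = Gop β y s) :
    BijOn y (Icc 0 1) (Icc 0 1) := by
  have hpos : ∀ x ∈ Ioc (0:ℝ) 1, 0 < y x := fun x hx => by
    have := rpow_div_two_le_Gop (by linarith) hy₀ (Ioc_subset_Icc_self hx)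
    rw [← hfix x (Ioc_subset_Icc_self hx)] at this
    linarith [Real.rpow_pos_of_pos hx.1 (β + 1)]
  have hlt : ∀ x ∈ Ico (0:ℝ) 1, y x < 1 := fun x hx => by
    linarith [hsymm x (Ico_subset_Icc_self hx), hpos (1 - x) ⟨by linarith [hx.2], by linarith [hx.1]⟩]
  have hstrict : StrictMonoOn y (Icc 0 1) := fun a ha b hb hab => by
    rw [hfix a ha, hfix b hb]
    exact Gop_strictMonoOn hβ.le hy hmono hy₀ hlt ha hb hab
  have h₀ : y 0 = 0 := by
    have := hfix 0 ⟨le_rfl, zero_le_one⟩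
    rw [Gop_zero (by linarith)] at this
    linarith
  have h₁ : y 1 = 1 := by
    have := hsymm 1 ⟨zero_le_one, le_rfl⟩
    rw [sub_self, h₀] at this
    linarith
  refine ⟨fun x hx => ⟨hy₀ x hx, by linarith [hsymm x hx, hy₀ _ (Icc.one_sub_mem hx)]⟩, hstrict.injOn, ?_⟩
  have hivt := intermediate_value_Icc zero_le_one hcont
  rwa [h₀, h₁] at hivt

end FixedPoint

/-- There is exactly one bounded Borel-measurable function
`g : [0,1] → ℝ` with `g = G*(g)`; it is continuous, monotonically increasing, a bijection
of `[0,1]` onto `[0,1]`, and satisfies `g(s) = 1 − g(1−s)` for all `s ∈ [0,1]`. -/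
theorem stmt19 :
    ∃ g : ℝ → ℝ,
      (Measurable ((Icc (0:ℝ) 1).restrict g) ∧
        (∃ M : ℝ, ∀ s ∈ Icc (0:ℝ) 1, |g s| ≤ M) ∧
        ∀ s ∈ Icc (0:ℝ) 1, g s = Gstar g s) ∧
      (∀ g' : ℝ → ℝ,
        Measurable ((Icc (0:ℝ) 1).restrict g') →
        (∃ M : ℝ, ∀ s ∈ Icc (0:ℝ) 1, |g' s| ≤ M) →
        (∀ s ∈ Icc (0:ℝ) 1, g' s = Gstar g' s) →
        ∀ s ∈ Icc (0:ℝ) 1, g' s = g s) ∧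
      ContinuousOn g (Icc (0:ℝ) 1) ∧
      MonotoneOn g (Icc (0:ℝ) 1) ∧
      BijOn g (Icc (0:ℝ) 1) (Icc (0:ℝ) 1) ∧
      ∀ s ∈ Icc (0:ℝ) 1, g s = 1 - g (1 - s) := by
  rw [Gstar_eq_Gop]
  obtain ⟨g, hcont, hg, hmono, hg₀, hsymm, hfix⟩ := exists_Gop_fixedPoint betaQ_pos
  have hbij := bijOn_of_Gop_fixed betaQ_pos hg hcont.continuousOn hmono hg₀ hsymm hfix
  refine ⟨g, ⟨hcont.measurable.comp measurable_subtype_coe,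
    ⟨1, fun s hs => abs_le.2 ⟨by linarith [(hbij.mapsTo hs).1], (hbij.mapsTo hs).2⟩⟩, hfix⟩,
    fun g' hm' hb' hfix' => ?_, hcont.continuousOn, hmono, hbij,
    fun s hs => eq_sub_of_add_eq (hsymm s hs)⟩
  -- `G*` only sees `g'` on `[0,1]`, so `g'` may be replaced by a bounded measurable extension.
  set y := IccExtend zero_le_one ((Icc (0:ℝ) 1).domRestrict g')
  have hy : EqOn y g' (Icc 0 1) := fun s hs => IccExtend_of_mem _ _ hs
  have hyb : BoundedMeasurable y :=
    boundedMeasurable_IccExtend hm' (hb'.imp fun _ hM x => hM x x.2)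
  intro s hs
  rw [← hy hs]
  refine eqOn_of_Gop_fixed betaQ_pos.le hyb hg (fun t ht => ?_) hfix hs
  rw [hy ht, hfix' t ht]
  exact Gop_congr (fun x hx => (hy hx).symm) ht

end Quadtree
end
end
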